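/- The trace-based coefficient c_k = Tr(A^k ⊕ c_1 ⊗ A^{k-1} ⊕ ⋯ ⊕ c_{k-1} ⊗ A) of the Faddeev-LeVerrier-style min-plus characteristic polynomial equals the minimum total weight over all (not necessarily disjoint) collections of closed walks in 𝒩(A) whose lengths sum to k. -/

import Mathlib

open Finset

/-- Tropical (min-plus) matrix product. -/
def tmul {n : ℕ} (A B : Matrix (Fin n) (Fin n) (WithTop ℝ)) :
    Matrix (Fin n) (Fin n) (WithTop ℝ) :=
  fun i j => Finset.univ.inf fun l => A i l + B l j

/-- Tropical matrix power (`A¹ = A`, `A^{k+1} = A^k ⊗ A`). -/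
def tpow {n : ℕ} (A : Matrix (Fin n) (Fin n) (WithTop ℝ)) : ℕ →
    Matrix (Fin n) (Fin n) (WithTop ℝ)
  | 0 => fun i j => if i = j then 0 else ⊤
  | k + 1 => tmul (tpow A k) A

/-- Tropical trace: the minimum of the diagonal entries. -/
def tTrace {n : ℕ} (M : Matrix (Fin n) (Fin n) (WithTop ℝ)) : WithTop ℝ :=
  Finset.univ.inf fun i => M i i

/-- `w` is the total weight of a collection of (not necessarily disjoint) closed
walks in the network of `A` whose lengths sum to `k`. -/
def IsClosedWalkCollWeight {n : ℕ} (A : Matrix (Fin n) (Fin n) (WithTop ℝ))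
    (k : ℕ) (w : WithTop ℝ) : Prop :=
  ∃ (m : ℕ) (s : Fin m → ℕ) (f : Fin m → ℕ → Fin n),
    (∀ i, 0 < s i) ∧ (∑ i, s i) = k ∧
    (∀ i, f i (s i) = f i 0) ∧
    w = ∑ i, ∑ t ∈ range (s i), A (f i t) (f i (t + 1))

/-! `c_k` is the minimum, over `r < k` and vertices `i`, of `c_r` plus the least
weight of a closed walk of length `k - r` at `i`. Peeling one closed walk off a collection
gives `c_k ≤ w` by induction on the number of walks; conversely, a minimizing pair `(r, i)`
together with a collection attaining `c_r` (by strong induction) attains `c_k`. -/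

variable {n : ℕ} {A : Matrix (Fin n) (Fin n) (WithTop ℝ)}

theorem tpow_apply_le_sum (k : ℕ) (f : ℕ → Fin n) :
    tpow A k (f 0) (f k) ≤ ∑ t ∈ range k, A (f t) (f (t + 1)) := by
  induction k with
  | zero => simp [tpow]
  | succ k ih =>
    calc tpow A (k + 1) (f 0) (f (k + 1))
        ≤ tpow A k (f 0) (f k) + A (f k) (f (k + 1)) := inf_le (mem_univ (f k))
      _ ≤ _ := by rw [sum_range_succ]; gcongr

theorem exists_sum_eq_tpow_apply {k : ℕ} {i j : Fin n} (h : tpow A k i j ≠ ⊤) :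
    ∃ f : ℕ → Fin n, f 0 = i ∧ f k = j ∧
      tpow A k i j = ∑ t ∈ range k, A (f t) (f (t + 1)) := by
  induction k generalizing j with
  | zero =>
    obtain rfl : i = j := by by_contra hij; simp [tpow, hij] at h
    exact ⟨fun _ => i, rfl, rfl, by simp [tpow]⟩
  | succ k ih =>
    obtain ⟨l, -, hl⟩ := exists_mem_eq_inf univ (univ_nonempty_iff.mpr ⟨i⟩)
      (fun l => tpow A k i l + A l j)
    change tpow A (k + 1) i j = tpow A k i l + A l j at hl
    obtain ⟨g, hg0, hgk, hg⟩ := ih (j := l) fun htop => h (by rw [hl, htop, top_add])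
    refine ⟨fun t => if t ≤ k then g t else j, by simpa using hg0, by simp, ?_⟩
    rw [sum_range_succ, hl, hg]
    congr 1
    · refine sum_congr rfl fun t ht => ?_
      have ht : t < k := mem_range.mp ht
      simp [ht.le, Nat.succ_le_of_lt ht]
    · simp [hgk]

theorem exists_closed_walk_sum_eq_tpow_apply (k : ℕ) (i : Fin n) :
    ∃ f : ℕ → Fin n, f 0 = i ∧ f k = i ∧
      tpow A k i i = ∑ t ∈ range k, A (f t) (f (t + 1)) := by
  by_cases h : tpow A k i i = ⊤
  · refine ⟨fun _ => i, rfl, rfl, ?_⟩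
    have hle := tpow_apply_le_sum (A := A) k fun _ => i
    rw [h, top_le_iff] at hle
    rw [h, hle]
  · exact exists_sum_eq_tpow_apply h

theorem isClosedWalkCollWeight_zero : IsClosedWalkCollWeight A 0 0 :=
  ⟨0, Fin.elim0, Fin.elim0, fun i => i.elim0, by simp, fun i => i.elim0, by simp⟩

theorem IsClosedWalkCollWeight.add_closed_walk {k l : ℕ} {w : WithTop ℝ}
    (hw : IsClosedWalkCollWeight A k w) (hl : 0 < l) {g : ℕ → Fin n} (hg : g l = g 0) :
    IsClosedWalkCollWeight A (l + k) ((∑ t ∈ range l, A (g t) (g (t + 1))) + w) := by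
  obtain ⟨m, s, f, hs, hsum, hf, rfl⟩ := hw
  refine ⟨m + 1, Fin.cons l s, Fin.cons g f, Fin.cases hl hs, ?_, Fin.cases hg hf, ?_⟩
  · rw [Fin.sum_cons, hsum]
  · rw [Fin.sum_univ_succ]
    simp only [Fin.cons_zero, Fin.cons_succ]

/-- The recursion `c_k = Tr(A^k ⊕ c₁ ⊗ A^{k-1} ⊕ ⋯ ⊕ c_{k-1} ⊗ A)`, read with `c₀ = 0`
so that the term `A^k` is `c₀ ⊗ A^k`. -/
def IsFLVCoeffs (A : Matrix (Fin n) (Fin n) (WithTop ℝ)) (c : ℕ → WithTop ℝ) : Prop :=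
  ∀ k, c (k + 1) =
    tTrace fun i j => (range (k + 1)).inf fun m => c m + tpow A (k + 1 - m) i j

namespace IsFLVCoeffs

variable {c : ℕ → WithTop ℝ}

theorem le_add_tpow_apply (hc : IsFLVCoeffs A c) {l : ℕ} (hl : 0 < l) (r : ℕ) (i : Fin n) :
    c (l + r) ≤ c r + tpow A l i i := by
  obtain ⟨l, rfl⟩ : ∃ l', l = l' + 1 := ⟨l - 1, by omega⟩
  rw [Nat.add_right_comm]
  calc c (l + r + 1) ≤ c r + tpow A (l + r + 1 - r) i i := by
        rw [hc]
        exact (inf_le (mem_univ i)).trans (inf_le (mem_range.mpr (by omega)))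
    _ = c r + tpow A (l + 1) i i := by rw [Nat.add_right_comm, Nat.add_sub_cancel]

theorem exists_eq_add_tpow_apply (hn : 0 < n) (hc : IsFLVCoeffs A c) (k : ℕ) :
    ∃ r < k + 1, ∃ i, c (k + 1) = c r + tpow A (k + 1 - r) i i := by
  have : Nonempty (Fin n) := ⟨⟨0, hn⟩⟩
  obtain ⟨i, -, hi⟩ := exists_mem_eq_inf univ univ_nonempty
    fun i => (range (k + 1)).inf fun m => c m + tpow A (k + 1 - m) i i
  obtain ⟨r, hr, hri⟩ := exists_mem_eq_inf (range (k + 1)) nonempty_range_add_one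
    fun m => c m + tpow A (k + 1 - m) i i
  exact ⟨r, mem_range.mp hr, i, (hc k).trans (hi.trans hri)⟩

theorem le_of_isClosedWalkCollWeight (hc0 : c 0 = 0) (hc : IsFLVCoeffs A c) {k : ℕ}
    {w : WithTop ℝ} (hw : IsClosedWalkCollWeight A k w) : c k ≤ w := by
  obtain ⟨m, s, f, hs, rfl, hf, rfl⟩ := hw
  induction m with
  | zero => simp [hc0]
  | succ m ih =>
    rw [Fin.sum_univ_succ, Fin.sum_univ_succ, add_comm (∑ t ∈ range (s 0), _)]
    have hwalk := tpow_apply_le_sum (A := A) (s 0) (f 0)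
    rw [hf 0] at hwalk
    calc c (s 0 + ∑ i : Fin m, s i.succ)
        ≤ c (∑ i : Fin m, s i.succ) + tpow A (s 0) (f 0 0) (f 0 0) :=
          hc.le_add_tpow_apply (hs 0) _ (f 0 0)
      _ ≤ _ := add_le_add (ih _ _ (fun i => hs i.succ) fun i => hf i.succ) hwalk

theorem isClosedWalkCollWeight (hn : 0 < n) (hc0 : c 0 = 0) (hc : IsFLVCoeffs A c) (k : ℕ) :
    IsClosedWalkCollWeight A k (c k) := by
  induction k using Nat.strong_induction_on with
  | _ k ih =>
    rcases k with _ | k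
    · exact hc0 ▸ isClosedWalkCollWeight_zero
    obtain ⟨r, hrk, i, hcr⟩ := hc.exists_eq_add_tpow_apply hn k
    obtain ⟨g, hg0, hgl, hg⟩ := exists_closed_walk_sum_eq_tpow_apply (A := A) (k + 1 - r) i
    have h := (ih r hrk).add_closed_walk (Nat.sub_pos_of_lt hrk) (hgl.trans hg0.symm)
    rwa [Nat.sub_add_cancel hrk.le, ← hg, add_comm (tpow _ _ _ _), ← hcr] at h

end IsFLVCoeffs

theorem flv_coeff_eq_min_closed_walk_collections {n : ℕ} (hn : 0 < n)
    (A : Matrix (Fin n) (Fin n) (WithTop ℝ)) (c : ℕ → WithTop ℝ)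
    (hc0 : c 0 = 0)
    (hc : ∀ k, c (k + 1) =
      tTrace fun i j => (range (k + 1)).inf fun m => c m + tpow A (k + 1 - m) i j) :
    ∀ k, 1 ≤ k → IsLeast {w : WithTop ℝ | IsClosedWalkCollWeight A k w} (c k) := by
  have hc : IsFLVCoeffs A c := hc
  exact fun k _ => ⟨hc.isClosedWalkCollWeight hn hc0 k,
    fun _ hw => hc.le_of_isClosedWalkCollWeight hc0 hw⟩
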